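/- Let q be a prime power with q ≡ 3 (mod 4). Then the three-dimensional Paley matrix H on PG(1,q) is a proper three-dimensional Hadamard matrix of order q+1: every 2-dimensional layer of H, obtained by fixing one coordinate and varying the other two, is a (q+1)×(q+1) Hadamard matrix (a {-1,1} matrix with pairwise orthogonal rows and pairwise orthogonal columns). -/

import Mathlib

set_option linter.unusedSectionVars false
set_option linter.unreachableTactic false
set_option linter.unusedTactic false
set_option maxHeartbeats 1000000


open Finset

/-- The quadratic character on a field: `χ(a) = 1` if `a` is a (nonzero) square
and `χ(a) = -1` if `a` is a non-square. (Its value at `0` is irrelevant below: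
it is only ever applied to nonzero field elements.) -/
noncomputable def chi {F : Type*} [Field F] (a : F) : ℤ := by
  classical exact if IsSquare a then 1 else -1

/-- The three-dimensional Paley matrix on the projective line
`PG(1,q) = {∞} ∪ 𝔽_q`, modelled as `Option F` with `none = ∞`:
`H(x,y,z) = -1` if `x = y = z`; `H(x,y,z) = 1` if exactly two of `x,y,z` are
equal; and for pairwise distinct coordinates `H(∞,y,z) = χ(z-y)`,
`H(x,∞,z) = χ(x-z)`, `H(x,y,∞) = χ(y-x)`, and
`H(x,y,z) = χ((x-y)(y-z)(z-x))` when `x,y,z ∈ 𝔽_q`. -/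
noncomputable def paleyH {F : Type*} [Field F] [DecidableEq F] :
    Option F → Option F → Option F → ℤ := fun x y z =>
  if x = y ∧ y = z then -1
  else if x = y ∨ y = z ∨ z = x then 1
  else match x, y, z with
    | none, some b, some c => chi (c - b)
    | some a, none, some c => chi (a - c)
    | some a, some b, none => chi (b - a)
    | some a, some b, some c => chi ((a - b) * (b - c) * (c - a))
    | _, _, _ => 1

/-- A 2-dimensional Hadamard matrix indexed by a finite type `X`:
a `{-1,1}`-matrix with pairwise orthogonal rows and pairwise orthogonal columns. -/
def IsHadamardMatrix {X : Type*} [Fintype X] [DecidableEq X] (M : X → X → ℤ) : Prop :=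
  (∀ x y, M x y = 1 ∨ M x y = -1) ∧
  (∀ a b, ∑ y : X, M a y * M b y = if a = b then (Fintype.card X : ℤ) else 0) ∧
  (∀ a b, ∑ x : X, M x a * M x b = if a = b then (Fintype.card X : ℤ) else 0)


section Aux
variable {F : Type*} [Field F] [Fintype F] [DecidableEq F]
variable {F : Type*} [Field F] [Fintype F] [DecidableEq F]

lemma chi_pm (a : F) : chi a = 1 ∨ chi a = -1 := by
  unfold chi; split_ifs <;> simp

lemma chi_eq_quad {a : F} (ha : a ≠ 0) : chi a = quadraticChar F a := by
  unfold chi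
  split_ifs with h
  · exact ((quadraticChar_one_iff_isSquare ha).mpr h).symm
  · exact (quadraticChar_neg_one_iff_not_isSquare.mpr h).symm

lemma chi_sq_mul {s : F} (hs : s ≠ 0) (a : F) : chi (s * s * a) = chi a := by
  by_cases ha : a = 0
  · simp [ha]
  · rw [chi_eq_quad (by simp [hs, ha] : s * s * a ≠ 0), chi_eq_quad ha, map_mul, map_mul,
      ← pow_two, quadraticChar_sq_one hs, one_mul]

lemma chi_neg (hq : Fintype.card F % 4 = 3) {a : F} (ha : a ≠ 0) : chi (-a) = -chi a := by
  have h1 : ¬ IsSquare (-1 : F) := by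
    rw [FiniteField.isSquare_neg_one_iff]; simp [hq]
  have hm : chi (-1 : F) = -1 := by unfold chi; rw [if_neg h1]
  have : (-a) = (-1) * (-1) * (-a) := by ring
  calc chi (-a) = chi ((-1 : F) * a) := by ring_nf
    _ = quadraticChar F ((-1) * a) := chi_eq_quad (by simp [ha])
    _ = quadraticChar F (-1) * quadraticChar F a := map_mul _ _ _
    _ = -chi a := by rw [← chi_eq_quad (by simp : (-1:F) ≠ 0), ← chi_eq_quad ha, hm, neg_one_mul]

-- value lemmas
lemma paleyH_diag (x : Option F) : paleyH x x x = -1 := by simp [paleyH]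

lemma paleyH_eq12 {x z : Option F} (h : x ≠ z) : paleyH x x z = 1 := by
  unfold paleyH
  rw [if_neg (by tauto), if_pos (by tauto)]

lemma paleyH_eq23 {x y : Option F} (h : x ≠ y) : paleyH x y y = 1 := by
  unfold paleyH
  rw [if_neg (by tauto), if_pos (by tauto)]

lemma paleyH_eq13 {x y : Option F} (h : x ≠ y) : paleyH x y x = 1 := by
  unfold paleyH
  rw [if_neg (fun hh => h hh.1), if_pos (Or.inr (Or.inr rfl))]

lemma paleyH_nss {b c : F} (h : b ≠ c) : paleyH none (some b) (some c) = chi (c - b) := by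
  unfold paleyH
  rw [if_neg (by simp [h]), if_neg (by simp [h])]

lemma paleyH_sns {a c : F} (h : a ≠ c) : paleyH (some a) none (some c) = chi (a - c) := by
  unfold paleyH
  rw [if_neg (by simp), if_neg (by simp [h, Ne.symm h])]

lemma paleyH_ssn {a b : F} (h : a ≠ b) : paleyH (some a) (some b) none = chi (b - a) := by
  unfold paleyH
  rw [if_neg (by simp [h]), if_neg (by simp [h])]

lemma paleyH_sss {a b c : F} (hab : a ≠ b) (hbc : b ≠ c) (hca : c ≠ a) :
    paleyH (some a) (some b) (some c) = chi ((a - b) * (b - c) * (c - a)) := by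
  unfold paleyH
  rw [if_neg (by simp [hab]), if_neg (by simp [hab, hbc, hca])]

lemma paleyH_pm (x y z : Option F) : paleyH x y z = 1 ∨ paleyH x y z = -1 := by
  unfold paleyH
  split_ifs
  · right; rfl
  · left; rfl
  · rcases x with _|a <;> rcases y with _|b <;> rcases z with _|c <;>
      first | exact chi_pm _ | (left; rfl)


lemma ringChar_ne_two (hq : Fintype.card F % 4 = 3) : ringChar F ≠ 2 := by
  rw [Ne, FiniteField.even_card_iff_char_two]
  omega

lemma sumA (hq : Fintype.card F % 4 = 3) (a : F) :
    ∑ y ∈ univ.erase a, chi (y - a) = 0 := by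
  have h1 : ∑ y ∈ univ.erase a, chi (y - a) = ∑ y ∈ univ.erase a, quadraticChar F (y - a) := by
    refine sum_congr rfl fun y hy => ?_
    exact chi_eq_quad (sub_ne_zero.mpr (mem_erase.mp hy).1)
  rw [h1]
  have h2 : ∑ y ∈ univ.erase a, quadraticChar F (y - a)
      = ∑ y : F, quadraticChar F (y - a) := by
    apply sum_subset (subset_univ _)
    intro y _ hy
    have : y = a := by simpa using hy
    simp [this]
  rw [h2]
  have h3 : ∑ y : F, quadraticChar F (y - a) = ∑ u : F, quadraticChar F u :=
    Fintype.sum_equiv (Equiv.subRight a) _ _ (fun y => rfl)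
  rw [h3, quadraticChar_sum_zero (ringChar_ne_two hq)]

lemma sumB (hq : Fintype.card F % 4 = 3) {a b : F} (hab : a ≠ b) :
    ∑ y : F, quadraticChar F ((y - a) * (y - b)) = -1 := by
  have hc : b - a ≠ 0 := sub_ne_zero.mpr (Ne.symm hab)
  -- shift by a : reduce to ∑ x, χ (x * (x - c)) with c = b - a
  have h0 : ∑ y : F, quadraticChar F ((y - a) * (y - b))
      = ∑ x : F, quadraticChar F (x * (x - (b - a))) := by
    refine Fintype.sum_equiv (Equiv.subRight a) _ _ fun y => congrArg _ ?_
    simp only [Equiv.subRight_apply]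
    ring
  rw [h0]
  set c := b - a with hcdef
  have h1 : ∑ x : F, quadraticChar F (x * (x - c))
      = ∑ x ∈ univ.erase (0 : F), quadraticChar F (x * (x - c)) := by
    symm
    apply sum_subset (subset_univ _)
    intro x _ hx
    have : x = 0 := by simpa using hx
    simp [this]
  rw [h1]
  have h2 : ∀ x ∈ univ.erase (0 : F), quadraticChar F (x * (x - c))
      = quadraticChar F (1 - c * x⁻¹) := by
    intro x hx
    have hx0 : x ≠ 0 := (mem_erase.mp hx).1
    have : x * (x - c) = x * x * (1 - c * x⁻¹) := by field_simp
    rw [this, map_mul, map_mul, ← pow_two, quadraticChar_sq_one hx0, one_mul]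
  rw [sum_congr rfl h2]
  have h3 : ∑ x ∈ univ.erase (0 : F), quadraticChar F (1 - c * x⁻¹)
      = ∑ u ∈ univ.erase (1 : F), quadraticChar F u := by
    apply sum_nbij' (fun x => 1 - c * x⁻¹) (fun u => c * (1 - u)⁻¹)
    · intro x hx
      have hx0 : x ≠ 0 := (mem_erase.mp hx).1
      simp only [mem_erase, mem_univ, and_true]
      intro h
      have : c * x⁻¹ = 0 := by linear_combination -h
      rcases mul_eq_zero.mp this with h' | h'
      · exact hc h'
      · exact hx0 (inv_eq_zero.mp h')
    · intro u hu
      have hu1 : u ≠ 1 := (mem_erase.mp hu).1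
      have : (1 : F) - u ≠ 0 := sub_ne_zero.mpr (Ne.symm hu1)
      simp only [mem_erase, mem_univ, and_true]
      exact mul_ne_zero hc (inv_ne_zero this)
    · intro x hx
      have hx0 : x ≠ 0 := (mem_erase.mp hx).1
      field_simp
      rw [sub_sub_cancel, div_self hc]
    · intro u hu
      have hu1 : u ≠ 1 := (mem_erase.mp hu).1
      have h1u : (1 : F) - u ≠ 0 := sub_ne_zero.mpr (Ne.symm hu1)
      field_simp
      ring
    · intro x hx; rfl
  rw [h3]
  have h4 : ∑ u ∈ univ.erase (1 : F), quadraticChar F u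
      = (∑ u : F, quadraticChar F u) - quadraticChar F 1 := by
    rw [← Finset.add_sum_erase _ _ (mem_univ (1 : F))]
    ring
  rw [h4, quadraticChar_sum_zero (ringChar_ne_two hq), map_one (quadraticChar F)]
  norm_num


lemma rowNone (hq : Fintype.card F % 4 = 3) :
    ∀ {a b : Option F}, a ≠ b → ∑ y : Option F, paleyH none a y * paleyH none b y = 0 := by
  have hns : ∀ t : F, (none : Option F) ≠ some t := fun t => by simp
  rintro (_|a) (_|b) hab
  · exact absurd rfl hab
  · -- a = ∞, b finite
    rw [Fintype.sum_option]
    have h2 : ∑ y : F, paleyH none none (some y) * paleyH none (some b) (some y)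
        = ∑ y : F, paleyH none (some b) (some y) := by
      refine sum_congr rfl fun y _ => ?_
      rw [paleyH_eq12 (hns y), one_mul]
    rw [paleyH_diag, paleyH_eq13 (hns b), h2, ← Finset.add_sum_erase _ _ (mem_univ b),
      paleyH_eq23 (hns b)]
    have h3 : ∑ y ∈ univ.erase b, paleyH none (some b) (some y)
        = ∑ y ∈ univ.erase b, chi (y - b) :=
      sum_congr rfl fun y hy => paleyH_nss (Ne.symm (mem_erase.mp hy).1)
    rw [h3, sumA hq]; ring
  · -- a finite, b = ∞
    rw [Fintype.sum_option]
    have h2 : ∑ y : F, paleyH none (some a) (some y) * paleyH none none (some y)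
        = ∑ y : F, paleyH none (some a) (some y) := by
      refine sum_congr rfl fun y _ => ?_
      rw [paleyH_eq12 (hns y), mul_one]
    rw [paleyH_diag, paleyH_eq13 (hns a), h2, ← Finset.add_sum_erase _ _ (mem_univ a),
      paleyH_eq23 (hns a)]
    have h3 : ∑ y ∈ univ.erase a, paleyH none (some a) (some y)
        = ∑ y ∈ univ.erase a, chi (y - a) :=
      sum_congr rfl fun y hy => paleyH_nss (Ne.symm (mem_erase.mp hy).1)
    rw [h3, sumA hq]; ring
  · -- both finite
    have hab' : a ≠ b := by simpa using hab
    have hmemb : b ∈ univ.erase a := mem_erase.mpr ⟨Ne.symm hab', mem_univ b⟩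
    rw [Fintype.sum_option, paleyH_eq13 (hns a), paleyH_eq13 (hns b),
      ← Finset.add_sum_erase _ _ (mem_univ a), ← Finset.add_sum_erase _ _ hmemb]
    have ga : paleyH none (some a) (some a) * paleyH none (some b) (some a)
        = chi (a - b) := by
      rw [paleyH_eq23 (hns a), paleyH_nss (Ne.symm hab'), one_mul]
    have gb : paleyH none (some a) (some b) * paleyH none (some b) (some b)
        = chi (b - a) := by
      rw [paleyH_eq23 (hns b), paleyH_nss hab', mul_one]
    have grest : ∑ y ∈ (univ.erase a).erase b,
        paleyH none (some a) (some y) * paleyH none (some b) (some y) = -1 := by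
      have e1 : ∀ y ∈ (univ.erase a).erase b,
          paleyH none (some a) (some y) * paleyH none (some b) (some y)
          = quadraticChar F ((y - a) * (y - b)) := by
        intro y hy
        have hyb : y ≠ b := (mem_erase.mp hy).1
        have hya : y ≠ a := (mem_erase.mp (mem_of_mem_erase hy)).1
        rw [paleyH_nss (Ne.symm hya), paleyH_nss (Ne.symm hyb),
          chi_eq_quad (sub_ne_zero.mpr hya), chi_eq_quad (sub_ne_zero.mpr hyb), ← map_mul]
      rw [sum_congr rfl e1]
      have e2 : ∑ y ∈ (univ.erase a).erase b, quadraticChar F ((y - a) * (y - b))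
          = ∑ y : F, quadraticChar F ((y - a) * (y - b)) := by
        apply sum_subset (subset_univ _)
        intro y _ hy
        rcases (by by_contra h; push_neg at h; exact hy (mem_erase.mpr ⟨h.2, mem_erase.mpr ⟨h.1, mem_univ y⟩⟩) : y = a ∨ y = b) with rfl | rfl <;> simp
      rw [e2, sumB hq hab']
    rw [ga, gb, grest]
    have : chi (b - a) = -chi (a - b) := by
      rw [show b - a = -(a - b) by ring, chi_neg hq (sub_ne_zero.mpr hab')]
    rw [this]; ring

lemma transNone (u v : Option F) :
    paleyH none u v = paleyH none (Option.map Neg.neg v) (Option.map Neg.neg u) := by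
  have hns : ∀ t : F, (none : Option F) ≠ some t := fun t => by simp
  rcases u with _|a <;> rcases v with _|b
  · rfl
  · rw [paleyH_eq12 (hns b), Option.map_some, Option.map_none, paleyH_eq13 (hns (-b))]
  · rw [paleyH_eq13 (hns a), Option.map_some, Option.map_none, paleyH_eq12 (hns (-a))]
  · by_cases hab : a = b
    · subst hab
      rw [paleyH_eq23 (hns a), Option.map_some, paleyH_eq23 (hns (-a))]
    · rw [paleyH_nss hab, Option.map_some, Option.map_some,
        paleyH_nss (by simpa using Ne.symm hab : -b ≠ -a), show -a - -b = b - a by ring]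

lemma colNone (hq : Fintype.card F % 4 = 3) {a b : Option F} (hab : a ≠ b) :
    ∑ x : Option F, paleyH none x a * paleyH none x b = 0 := by
  let e : Option F ≃ Option F := Equiv.optionCongr (Equiv.neg F)
  have he : ∀ x : Option F, Option.map Neg.neg x = e x := by
    intro x; cases x <;> simp [e]
  have h1 : ∑ x : Option F, paleyH none x a * paleyH none x b
      = ∑ x : Option F, paleyH none (Option.map Neg.neg a) (e x)
          * paleyH none (Option.map Neg.neg b) (e x) := by
    refine sum_congr rfl fun x _ => ?_
    rw [transNone x a, transNone x b, he x]
  rw [h1, Equiv.sum_comp e (fun u => paleyH none (Option.map Neg.neg a) u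
      * paleyH none (Option.map Neg.neg b) u)]
  apply rowNone hq
  rw [he, he]
  exact e.injective.ne hab


lemma chi_factor {s u v : F} (hs : s ≠ 0) (h : u = s * s * v) : chi u = chi v := by
  rw [h, chi_sq_mul hs]

def mob (r : F) : Option F → Option F
  | none => some 0
  | some t => if t = r then none else some (-(t - r)⁻¹)

lemma mob_none (r : F) : mob r none = some 0 := rfl
lemma mob_r (r : F) : mob r (some r) = none := by simp [mob]
lemma mob_some {r t : F} (ht : t ≠ r) : mob r (some t) = some (-(t - r)⁻¹) := by
  simp [mob, ht]

def mobInv (r : F) : Option F → Option F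
  | none => some r
  | some u => if u = 0 then none else some (r - u⁻¹)

def mobE (r : F) : Option F ≃ Option F where
  toFun := mob r
  invFun := mobInv r
  left_inv := by
    intro x
    rcases x with _|t
    · simp [mob, mobInv]
    · by_cases ht : t = r
      · simp [mob, mobInv, ht]
      · have h0 : t - r ≠ 0 := sub_ne_zero.mpr ht
        rw [mob_some ht]
        rw [show mobInv r (some (-(t - r)⁻¹)) = some (r - (-(t - r)⁻¹)⁻¹) by
          simp [mobInv, h0]]
        congr 1
        rw [inv_neg, inv_inv]
        ring
  right_inv := by
    intro x
    rcases x with _|u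
    · exact mob_r r
    · by_cases hu : u = 0
      · simp [mobInv, hu, mob]
      · rw [show mobInv r (some u) = some (r - u⁻¹) by simp [mobInv, hu]]
        have hne : r - u⁻¹ ≠ r := by simp [hu]
        rw [mob_some hne]
        congr 1
        rw [show r - u⁻¹ - r = -u⁻¹ by ring, inv_neg, neg_neg, inv_inv]

lemma mob_injective (r : F) : Function.Injective (mob r) := (mobE r).injective

lemma paleyH_mob (r : F) (x y z : Option F) :
    paleyH (mob r x) (mob r y) (mob r z) = paleyH x y z := by
  have hinj := mob_injective r
  by_cases hxy : x = y
  · subst hxy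
    by_cases hyz : x = z
    · subst hyz; rw [paleyH_diag, paleyH_diag]
    · rw [paleyH_eq12 hyz, paleyH_eq12 (hinj.ne hyz)]
  · by_cases hyz : y = z
    · subst hyz; rw [paleyH_eq23 hxy, paleyH_eq23 (hinj.ne hxy)]
    · by_cases hzx : z = x
      · subst hzx; rw [paleyH_eq13 hxy, paleyH_eq13 (hinj.ne hxy)]
      · -- pairwise distinct
        have hsne : ∀ {u v : F}, u ≠ v → (-(u - r)⁻¹ : F) ≠ -(v - r)⁻¹ := by
          intro u v huv h
          exact huv (by linear_combination inv_injective (neg_injective h))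
        have h0ne : ∀ {t : F}, t ≠ r → (0:F) ≠ -(t - r)⁻¹ := by
          intro t ht h
          exact inv_ne_zero (sub_ne_zero.mpr ht) (neg_eq_zero.mp h.symm)
        rcases x with _|a <;> rcases y with _|b <;> rcases z with _|c
        · exact absurd rfl hxy
        · exact absurd rfl hxy
        · exact absurd rfl hzx
        · -- (∞, b, c)
          have hbc : b ≠ c := by simpa using hyz
          by_cases hb : r = b
          · subst hb
            have hc : c ≠ r := Ne.symm hbc
            have hc0 : c - r ≠ 0 := sub_ne_zero.mpr hc
            rw [mob_none, mob_r, mob_some hc, paleyH_sns (h0ne hc), paleyH_nss hbc]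
            exact chi_factor (inv_ne_zero hc0) (by field_simp; try ring; try (ring_nf; tauto))
          · have hb' : b ≠ r := Ne.symm hb
            have hb0 : b - r ≠ 0 := sub_ne_zero.mpr hb'
            by_cases hc : r = c
            · subst hc
              rw [mob_none, mob_some hb', mob_r, paleyH_ssn (h0ne hb'), paleyH_nss hbc]
              exact chi_factor (inv_ne_zero hb0) (by field_simp; try ring; try (ring_nf; tauto))
            · have hc' : c ≠ r := Ne.symm hc
              have hc0 : c - r ≠ 0 := sub_ne_zero.mpr hc'
              rw [mob_none, mob_some hb', mob_some hc',
                paleyH_sss (h0ne hb') (hsne hbc) (Ne.symm (h0ne hc')), paleyH_nss hbc]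
              exact chi_factor (inv_ne_zero (mul_ne_zero hb0 hc0)) (by field_simp; try ring; try (ring_nf; tauto))
        · exact absurd rfl hyz
        · -- (a, ∞, c)
          have hca : c ≠ a := by simpa using hzx
          by_cases ha : r = a
          · subst ha
            have hc : c ≠ r := hca
            have hc0 : c - r ≠ 0 := sub_ne_zero.mpr hc
            rw [mob_r, mob_none, mob_some hc, paleyH_nss (h0ne hc), paleyH_sns (Ne.symm hca)]
            exact chi_factor (inv_ne_zero hc0) (by field_simp; try ring; try (ring_nf; tauto))
          · have ha' : a ≠ r := Ne.symm ha
            have ha0 : a - r ≠ 0 := sub_ne_zero.mpr ha'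
            by_cases hc : r = c
            · subst hc
              rw [mob_some ha', mob_none, mob_r, paleyH_ssn (Ne.symm (h0ne ha')),
                paleyH_sns (Ne.symm hca)]
              exact chi_factor (inv_ne_zero ha0) (by field_simp; try ring; try (ring_nf; tauto))
            · have hc' : c ≠ r := Ne.symm hc
              have hc0 : c - r ≠ 0 := sub_ne_zero.mpr hc'
              rw [mob_some ha', mob_none, mob_some hc',
                paleyH_sss (Ne.symm (h0ne ha')) (h0ne hc') (hsne hca), paleyH_sns (Ne.symm hca)]
              exact chi_factor (inv_ne_zero (mul_ne_zero ha0 hc0)) (by field_simp; try ring; try (ring_nf; tauto))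
        · -- (a, b, ∞)
          have hab : a ≠ b := by simpa using hxy
          by_cases ha : r = a
          · subst ha
            have hb' : b ≠ r := Ne.symm hab
            have hb0 : b - r ≠ 0 := sub_ne_zero.mpr hb'
            rw [mob_r, mob_some hb', mob_none, paleyH_nss (Ne.symm (h0ne hb')),
              paleyH_ssn hab]
            exact chi_factor (inv_ne_zero hb0) (by field_simp; try ring; try (ring_nf; tauto))
          · have ha' : a ≠ r := Ne.symm ha
            have ha0 : a - r ≠ 0 := sub_ne_zero.mpr ha'
            by_cases hb : r = b
            · subst hb
              rw [mob_some ha', mob_r, mob_none, paleyH_sns (Ne.symm (h0ne ha')),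
                paleyH_ssn hab]
              exact chi_factor (inv_ne_zero ha0) (by field_simp; try ring; try (ring_nf; tauto))
            · have hb' : b ≠ r := Ne.symm hb
              have hb0 : b - r ≠ 0 := sub_ne_zero.mpr hb'
              rw [mob_some ha', mob_some hb', mob_none,
                paleyH_sss (hsne hab) (Ne.symm (h0ne hb')) (h0ne ha'), paleyH_ssn hab]
              exact chi_factor (inv_ne_zero (mul_ne_zero ha0 hb0)) (by field_simp; try ring; try (ring_nf; tauto))
        · -- (a, b, c)
          have hab : a ≠ b := by simpa using hxy
          have hbc : b ≠ c := by simpa using hyz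
          have hca : c ≠ a := by simpa using hzx
          by_cases ha : r = a
          · subst ha
            have hb' : b ≠ r := Ne.symm hab
            have hc' : c ≠ r := hca
            have hb0 : b - r ≠ 0 := sub_ne_zero.mpr hb'
            have hc0 : c - r ≠ 0 := sub_ne_zero.mpr hc'
            rw [mob_r, mob_some hb', mob_some hc', paleyH_nss (hsne hbc),
              paleyH_sss hab hbc hca]
            exact chi_factor (inv_ne_zero (mul_ne_zero hb0 hc0)) (by field_simp; try ring; try (ring_nf; tauto))
          · have ha' : a ≠ r := Ne.symm ha
            have ha0 : a - r ≠ 0 := sub_ne_zero.mpr ha'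
            by_cases hb : r = b
            · subst hb
              have hc' : c ≠ r := Ne.symm hbc
              have hc0 : c - r ≠ 0 := sub_ne_zero.mpr hc'
              rw [mob_some ha', mob_r, mob_some hc', paleyH_sns (hsne (Ne.symm hca)),
                paleyH_sss hab hbc hca]
              exact chi_factor (inv_ne_zero (mul_ne_zero ha0 hc0)) (by field_simp; try ring; try (ring_nf; tauto))
            · have hb' : b ≠ r := Ne.symm hb
              have hb0 : b - r ≠ 0 := sub_ne_zero.mpr hb'
              by_cases hc : r = c
              · subst hc
                rw [mob_some ha', mob_some hb', mob_r, paleyH_ssn (hsne hab),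
                  paleyH_sss hab hbc hca]
                exact chi_factor (inv_ne_zero (mul_ne_zero ha0 hb0)) (by field_simp; try ring; try (ring_nf; tauto))
              · have hc' : c ≠ r := Ne.symm hc
                have hc0 : c - r ≠ 0 := sub_ne_zero.mpr hc'
                rw [mob_some ha', mob_some hb', mob_some hc',
                  paleyH_sss (hsne hab) (hsne hbc) (hsne hca), paleyH_sss hab hbc hca]
                exact chi_factor (inv_ne_zero (mul_ne_zero (mul_ne_zero ha0 hb0) hc0))
                  (by field_simp; try ring; try (ring_nf; tauto))
lemma paleyH_cyc (x y z : Option F) : paleyH x y z = paleyH y z x := by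
  by_cases hxy : x = y
  · subst hxy
    by_cases hxz : x = z
    · subst hxz; rfl
    · rw [paleyH_eq12 hxz, paleyH_eq13 hxz]
  · by_cases hyz : y = z
    · subst hyz; rw [paleyH_eq23 hxy, paleyH_eq12 (Ne.symm hxy)]
    · by_cases hzx : z = x
      · subst hzx; rw [paleyH_eq13 hxy, paleyH_eq23 (Ne.symm hxy)]
      · rcases x with _|a <;> rcases y with _|b <;> rcases z with _|c
        · exact absurd rfl hxy
        · exact absurd rfl hxy
        · exact absurd rfl hzx
        · have hbc : b ≠ c := by simpa using hyz
          rw [paleyH_nss hbc, paleyH_ssn hbc]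
        · exact absurd rfl hyz
        · have hca : c ≠ a := by simpa using hzx
          rw [paleyH_sns (Ne.symm hca), paleyH_nss hca]
        · have hab : a ≠ b := by simpa using hxy
          rw [paleyH_ssn hab, paleyH_sns (Ne.symm hab)]
        · have hab : a ≠ b := by simpa using hxy
          have hbc : b ≠ c := by simpa using hyz
          have hca : c ≠ a := by simpa using hzx
          rw [paleyH_sss hab hbc hca, paleyH_sss hbc hca hab]
          exact congrArg chi (by ring)

lemma layer_row (hq : Fintype.card F % 4 = 3) (c a b : Option F) :
    ∑ y : Option F, paleyH c a y * paleyH c b y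
      = if a = b then (Fintype.card (Option F) : ℤ) else 0 := by
  by_cases hab : a = b
  · subst hab
    rw [if_pos rfl]
    have h1 : ∀ y : Option F, paleyH c a y * paleyH c a y = 1 := fun y => by
      rcases paleyH_pm c a y with h | h <;> rw [h] <;> norm_num
    rw [sum_congr rfl fun y _ => h1 y, sum_const, card_univ, nsmul_eq_mul, mul_one]
  · rw [if_neg hab]
    rcases c with _|r
    · exact rowNone hq hab
    · have key : ∀ u v : Option F, paleyH none (mob r u) (mob r v) = paleyH (some r) u v := by
        intro u v
        have h := paleyH_mob r (some r) u v
        rwa [mob_r] at h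
      have h1 : ∑ y : Option F, paleyH (some r) a y * paleyH (some r) b y
          = ∑ y : Option F, (fun u => paleyH none (mob r a) u * paleyH none (mob r b) u)
              (mobE r y) := by
        refine sum_congr rfl fun y _ => ?_
        show _ = paleyH none (mob r a) (mob r y) * paleyH none (mob r b) (mob r y)
        rw [key a y, key b y]
      rw [h1, Equiv.sum_comp (mobE r)
        (fun u => paleyH none (mob r a) u * paleyH none (mob r b) u)]
      exact rowNone hq ((mob_injective r).ne hab)

lemma layer_col (hq : Fintype.card F % 4 = 3) (c a b : Option F) :
    ∑ x : Option F, paleyH c x a * paleyH c x b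
      = if a = b then (Fintype.card (Option F) : ℤ) else 0 := by
  by_cases hab : a = b
  · subst hab
    rw [if_pos rfl]
    have h1 : ∀ x : Option F, paleyH c x a * paleyH c x a = 1 := fun x => by
      rcases paleyH_pm c x a with h | h <;> rw [h] <;> norm_num
    rw [sum_congr rfl fun x _ => h1 x, sum_const, card_univ, nsmul_eq_mul, mul_one]
  · rw [if_neg hab]
    rcases c with _|r
    · exact colNone hq hab
    · have key : ∀ u v : Option F, paleyH none (mob r u) (mob r v) = paleyH (some r) u v := by
        intro u v
        have h := paleyH_mob r (some r) u v
        rwa [mob_r] at h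
      have h1 : ∑ x : Option F, paleyH (some r) x a * paleyH (some r) x b
          = ∑ x : Option F, (fun u => paleyH none u (mob r a) * paleyH none u (mob r b))
              (mobE r x) := by
        refine sum_congr rfl fun x _ => ?_
        show _ = paleyH none (mob r x) (mob r a) * paleyH none (mob r x) (mob r b)
        rw [key x a, key x b]
      rw [h1, Equiv.sum_comp (mobE r)
        (fun u => paleyH none u (mob r a) * paleyH none u (mob r b))]
      exact colNone hq ((mob_injective r).ne hab)


end Aux

/-- For `q ≡ 3 (mod 4)`, the three-dimensional Paley matrix is a *proper*
three-dimensional Hadamard matrix of order `q + 1`: every 2-dimensional layer,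
obtained by fixing one coordinate and varying the other two, is a
`(q+1) × (q+1)` Hadamard matrix. -/
theorem paleyH_is_proper_hadamard {F : Type*} [Field F] [Fintype F] [DecidableEq F]
    (hq : Fintype.card F % 4 = 3) :
    ∀ c : Option F,
      IsHadamardMatrix (fun x y : Option F => paleyH c x y) ∧
      IsHadamardMatrix (fun x y : Option F => paleyH x c y) ∧
      IsHadamardMatrix (fun x y : Option F => paleyH x y c) := by
  intro c
  refine ⟨⟨fun x y => paleyH_pm c x y, fun a b => layer_row hq c a b,
      fun a b => layer_col hq c a b⟩,
    ⟨fun x y => paleyH_pm x c y, fun a b => ?_, fun a b => ?_⟩,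
    ⟨fun x y => paleyH_pm x y c, fun a b => ?_, fun a b => ?_⟩⟩
  · -- rows of (x, y) ↦ paleyH x c y
    have h1 : ∀ y : Option F, paleyH a c y * paleyH b c y = paleyH c y a * paleyH c y b := by
      intro y
      rw [paleyH_cyc a c y, paleyH_cyc b c y]
    simp only [h1]
    exact layer_col hq c a b
  · -- columns of (x, y) ↦ paleyH x c y
    have h1 : ∀ x : Option F, paleyH x c a * paleyH x c b = paleyH c a x * paleyH c b x := by
      intro x
      rw [paleyH_cyc x c a, paleyH_cyc x c b]
    simp only [h1]
    exact layer_row hq c a b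
  · -- rows of (x, y) ↦ paleyH x y c
    have h1 : ∀ y : Option F, paleyH a y c * paleyH b y c = paleyH c a y * paleyH c b y := by
      intro y
      rw [paleyH_cyc a y c, paleyH_cyc y c a, paleyH_cyc b y c, paleyH_cyc y c b]
    simp only [h1]
    exact layer_row hq c a b
  · -- columns of (x, y) ↦ paleyH x y c
    have h1 : ∀ x : Option F, paleyH x a c * paleyH x b c = paleyH c x a * paleyH c x b := by
      intro x
      rw [paleyH_cyc x a c, paleyH_cyc a c x, paleyH_cyc x b c, paleyH_cyc b c x]
    simp only [h1]
    exact layer_col hq c a b
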